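/- Let A be a bounded linear operator on a complex Hilbert space H and φ, Φ ∈ ℂ with Φ ≠ −φ and Φ ≠ φ. If Re⟨Φx − Ax, Ax − φx⟩ ≥ 0 for all unit vectors x ∈ H, then ‖A‖ − w(A) ≤ |Φ − φ|²/(4|Φ + φ|). -/

import Mathlib

noncomputable def numRadius {H : Type*} [NormedAddCommGroup H] [InnerProductSpace ℂ H]
    (T : H →L[ℂ] H) : ℝ :=
  sSup {r : ℝ | ∃ x : H, ‖x‖ = 1 ∧ r = ‖(inner ℂ (T x) x : ℂ)‖}

/-! At a unit vector `x`, the hypothesis expands to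
`‖A x‖² + Re(conj Φ φ) ≤ Re((Φ + φ) ⟪A x, x⟫) ≤ |Φ + φ| w(A)`. Since
`4 Re(conj Φ φ) = |Φ + φ|² - |Φ - φ|²` and `|Φ + φ| ‖A x‖ ≤ ‖A x‖² + |Φ + φ|² / 4`, this gives
`‖A x‖ ≤ w(A) + |Φ - φ|² / (4 |Φ + φ|)`, and taking the supremum over `x` bounds `‖A‖`. -/

open ComplexConjugate

lemma Complex.norm_add_sq_sub_norm_sub_sq (z w : ℂ) :
    ‖z + w‖ ^ 2 - ‖z - w‖ ^ 2 = 4 * (conj z * w).re := by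
  rw [norm_add_sq (𝕜 := ℂ), norm_sub_sq (𝕜 := ℂ), RCLike.inner_apply', RCLike.re_to_complex]
  ring

section NumRadius

variable {H : Type*} [NormedAddCommGroup H] [InnerProductSpace ℂ H]

lemma numRadius_nonneg (T : H →L[ℂ] H) : 0 ≤ numRadius T :=
  Real.sSup_nonneg <| by rintro _ ⟨x, -, rfl⟩; exact norm_nonneg _

lemma norm_inner_apply_le_numRadius (T : H →L[ℂ] H) {x : H} (hx : ‖x‖ = 1) :
    ‖(inner ℂ (T x) x : ℂ)‖ ≤ numRadius T := by
  refine le_csSup ⟨‖T‖, ?_⟩ ⟨x, hx, rfl⟩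
  rintro _ ⟨y, hy, rfl⟩
  calc ‖(inner ℂ (T y) y : ℂ)‖ ≤ ‖T y‖ * ‖y‖ := norm_inner_le_norm _ _
    _ ≤ ‖T‖ * ‖y‖ * ‖y‖ := by gcongr; exact T.le_opNorm y
    _ = ‖T‖ := by rw [hy, mul_one, mul_one]

lemma re_inner_smul_sub_sub_smul (Φ φ : ℂ) (x y : H) :
    (inner ℂ (Φ • x - y) (y - φ • x)).re =
      ((Φ + φ) * inner ℂ y x).re - (conj Φ * φ).re * ‖x‖ ^ 2 - ‖y‖ ^ 2 := by
  rw [inner_sub_left, inner_sub_right, inner_sub_right, inner_smul_left, inner_smul_left,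
    inner_smul_right, inner_smul_right, inner_self_eq_norm_sq_to_K, inner_self_eq_norm_sq_to_K,
    ← inner_conj_symm y x]
  simp only [Complex.coe_algebraMap, ← Complex.ofReal_pow, Complex.sub_re, Complex.add_re,
    Complex.add_im, Complex.mul_re, Complex.mul_im, Complex.conj_re, Complex.conj_im,
    Complex.ofReal_re, Complex.ofReal_im]
  ring

lemma norm_apply_le_of_re_inner_nonneg (T : H →L[ℂ] H) {Φ φ : ℂ} (hΦφ : Φ + φ ≠ 0) {x : H}
    (hx : ‖x‖ = 1) (h : 0 ≤ (inner ℂ (Φ • x - T x) (T x - φ • x)).re) :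
    ‖T x‖ ≤ numRadius T + ‖Φ - φ‖ ^ 2 / (4 * ‖Φ + φ‖) := by
  have hK : 0 < ‖Φ + φ‖ := norm_pos_iff.mpr hΦφ
  have hquad : ‖T x‖ ^ 2 + (conj Φ * φ).re ≤ ‖Φ + φ‖ * numRadius T := by
    rw [re_inner_smul_sub_sub_smul, hx] at h
    calc ‖T x‖ ^ 2 + (conj Φ * φ).re ≤ ((Φ + φ) * inner ℂ (T x) x).re := by linarith
      _ ≤ ‖Φ + φ‖ * ‖(inner ℂ (T x) x : ℂ)‖ := (Complex.re_le_norm _).trans_eq (norm_mul _ _)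
      _ ≤ ‖Φ + φ‖ * numRadius T := by gcongr; exact norm_inner_apply_le_numRadius T hx
  have hpolar := Complex.norm_add_sq_sub_norm_sub_sq Φ φ
  rw [← sub_le_iff_le_add', le_div_iff₀ (by positivity)]
  nlinarith [sq_nonneg (2 * ‖T x‖ - ‖Φ + φ‖)]

end NumRadius

theorem stmt_3_general {H : Type*} [NormedAddCommGroup H] [InnerProductSpace ℂ H]
    (A : H →L[ℂ] H) (phi Phi : ℂ) (h1 : Phi ≠ -phi)
    (h : ∀ x : H, ‖x‖ = 1 → 0 ≤ (inner ℂ (Phi • x - A x) (A x - phi • x) : ℂ).re) :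
    ‖A‖ - numRadius A ≤ ‖Phi - phi‖ ^ 2 / (4 * ‖Phi + phi‖) := by
  have hsum : Phi + phi ≠ 0 := fun h0 => h1 (eq_neg_of_add_eq_zero_left h0)
  rw [sub_le_iff_le_add']
  exact A.opNorm_le_of_unit_norm (add_nonneg (numRadius_nonneg A) (by positivity))
    fun x hx => norm_apply_le_of_re_inner_nonneg A hsum hx (h x hx)

theorem stmt_3 {H : Type*} [NormedAddCommGroup H] [InnerProductSpace ℂ H] [CompleteSpace H]
    (A : H →L[ℂ] H) (phi Phi : ℂ) (h1 : Phi ≠ -phi) (h2 : Phi ≠ phi)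
    (h : ∀ x : H, ‖x‖ = 1 → 0 ≤ (inner ℂ (Phi • x - A x) (A x - phi • x) : ℂ).re) :
    ‖A‖ - numRadius A ≤ ‖Phi - phi‖ ^ 2 / (4 * ‖Phi + phi‖) :=
  stmt_3_general A phi Phi h1 h
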